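/- Precise convergence to injections agrees on tags: if M' ⊑ M, both closed and well-typed, M' converges to an injection inj_i W' and M converges to inj_k W, then i = k and W' ⊑ W. -/

import Mathlib

set_option linter.unusedVariables false

/-! ## Target language -/

inductive Tag | plus | plus1 | plus2
deriving DecidableEq

inductive TTy
| unit
| arr (T₁ T₂ : TTy)
| sum (φ : Tag) (T₁ T₂ : TTy)
deriving DecidableEq

inductive Tm
| var (n : Nat)
| unit
| lam (T : TTy) (b : Tm)
| app (f a : Tm)
| inj (i : Bool) (m : Tm)          -- inj true = inj₁, inj false = inj₂
| case2 (m b₁ b₂ : Tm)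
| case1 (i : Bool) (m b : Tm)
| cast (φ₁ φ₂ : Tag) (m : Tm)
| matchfail
deriving DecidableEq

namespace Tm

def shift (d c : Nat) : Tm → Tm
| var n => var (if n < c then n else n + d)
| unit => unit
| lam T b => lam T (shift d (c+1) b)
| app f a => app (shift d c f) (shift d c a)
| inj i m => inj i (shift d c m)
| case2 m b₁ b₂ => case2 (shift d c m) (shift d (c+1) b₁) (shift d (c+1) b₂)
| case1 i m b => case1 i (shift d c m) (shift d (c+1) b)
| cast φ₁ φ₂ m => cast φ₁ φ₂ (shift d c m)
| matchfail => matchfail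

def subst : Tm → Nat → Tm → Tm
| var n, k, s => if n = k then s else if k < n then var (n-1) else var n
| unit, _, _ => unit
| lam T b, k, s => lam T (subst b (k+1) (shift 1 0 s))
| app f a, k, s => app (subst f k s) (subst a k s)
| inj i m, k, s => inj i (subst m k s)
| case2 m b₁ b₂, k, s =>
    case2 (subst m k s) (subst b₁ (k+1) (shift 1 0 s)) (subst b₂ (k+1) (shift 1 0 s))
| case1 i m b, k, s => case1 i (subst m k s) (subst b (k+1) (shift 1 0 s))
| cast φ₁ φ₂ m, k, s => cast φ₁ φ₂ (subst m k s)
| matchfail, _, _ => matchfail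

def subst0 (b s : Tm) : Tm := subst b 0 s

/-- no cast subterm -/
def castFree : Tm → Prop
| var _ => True
| unit => True
| lam _ b => castFree b
| app f a => castFree f ∧ castFree a
| inj _ m => castFree m
| case2 m b₁ b₂ => castFree m ∧ castFree b₁ ∧ castFree b₂
| case1 _ m b => castFree m ∧ castFree b
| cast _ _ _ => False
| matchfail => True

/-- no matchfail subterm -/
def mfFree : Tm → Prop
| var _ => True
| unit => True
| lam _ b => mfFree b
| app f a => mfFree f ∧ mfFree a
| inj _ m => mfFree m
| case2 m b₁ b₂ => mfFree m ∧ mfFree b₁ ∧ mfFree b₂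
| case1 _ m b => mfFree m ∧ mfFree b
| cast _ _ m => mfFree m
| matchfail => False

end Tm

inductive Value : Tm → Prop
| unit : Value .unit
| lam : ∀ T b, Value (.lam T b)
| inj : ∀ i m, Value m → Value (.inj i m)

/-- the injection tag `i` is compatible with sum constructor `φ` -/
def tagOk (i : Bool) (φ : Tag) : Prop :=
  φ = Tag.plus ∨ φ = (if i then Tag.plus1 else Tag.plus2)

instance (i : Bool) (φ : Tag) : Decidable (tagOk i φ) := by
  unfold tagOk; infer_instance

/-! ### Target typing -/

inductive Typed : List TTy → Tm → TTy → Prop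
| var : ∀ {Γ n T}, Γ[n]? = some T → Typed Γ (.var n) T
| unit : ∀ {Γ}, Typed Γ .unit .unit
| lam : ∀ {Γ T₁ T₂ b}, Typed (T₁ :: Γ) b T₂ → Typed Γ (.lam T₁ b) (.arr T₁ T₂)
| app : ∀ {Γ f a T₁ T₂}, Typed Γ f (.arr T₁ T₂) → Typed Γ a T₁ → Typed Γ (.app f a) T₂
| inj : ∀ {Γ i m T₁ T₂ φ}, Typed Γ m (if i then T₁ else T₂) → tagOk i φ →
    Typed Γ (.inj i m) (.sum φ T₁ T₂)
| case2 : ∀ {Γ m b₁ b₂ φ T₁ T₂ T}, Typed Γ m (.sum φ T₁ T₂) →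
    Typed (T₁ :: Γ) b₁ T → Typed (T₂ :: Γ) b₂ T → Typed Γ (.case2 m b₁ b₂) T
| case1 : ∀ {Γ i m b T₁ T₂ T}, Typed Γ m (.sum (if i then Tag.plus1 else Tag.plus2) T₁ T₂) →
    Typed ((if i then T₁ else T₂) :: Γ) b T → Typed Γ (.case1 i m b) T
| cast : ∀ {Γ φ₁ φ₂ m T₁ T₂}, Typed Γ m (.sum φ₁ T₁ T₂) →
    Typed Γ (.cast φ₁ φ₂ m) (.sum φ₂ T₁ T₂)
| matchfail : ∀ {Γ T}, Typed Γ .matchfail T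

/-! ### Target operational semantics (call-by-value) -/

inductive Step : Tm → Tm → Prop
| beta : ∀ {T b v}, Value v → Step (.app (.lam T b) v) (b.subst0 v)
| app1 : ∀ {m m' n}, Step m m' → Step (.app m n) (.app m' n)
| app2 : ∀ {v n n'}, Value v → Step n n' → Step (.app v n) (.app v n')
| injC : ∀ {i m m'}, Step m m' → Step (.inj i m) (.inj i m')
| case2C : ∀ {m m' b₁ b₂}, Step m m' → Step (.case2 m b₁ b₂) (.case2 m' b₁ b₂)
| case1C : ∀ {i m m' b}, Step m m' → Step (.case1 i m b) (.case1 i m' b)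
| castC : ∀ {φ₁ φ₂ m m'}, Step m m' → Step (.cast φ₁ φ₂ m) (.cast φ₁ φ₂ m')
| case2R : ∀ {i v b₁ b₂}, Value v →
    Step (.case2 (.inj i v) b₁ b₂) ((if i then b₁ else b₂).subst0 v)
| case1R : ∀ {i v b}, Value v → Step (.case1 i (.inj i v) b) (b.subst0 v)
| castOk : ∀ {φ₁ φ₂ i v}, Value v → tagOk i φ₂ →
    Step (.cast φ₁ φ₂ (.inj i v)) (.inj i v)
| castFail : ∀ {φ₁ φ₂ i v}, Value v → ¬ tagOk i φ₂ →
    Step (.cast φ₁ φ₂ (.inj i v)) .matchfail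
| mfApp1 : ∀ {n}, Step (.app .matchfail n) .matchfail
| mfApp2 : ∀ {v}, Value v → Step (.app v .matchfail) .matchfail
| mfInj : ∀ {i}, Step (.inj i .matchfail) .matchfail
| mfCase2 : ∀ {b₁ b₂}, Step (.case2 .matchfail b₁ b₂) .matchfail
| mfCase1 : ∀ {i b}, Step (.case1 i .matchfail b) .matchfail
| mfCast : ∀ {φ₁ φ₂}, Step (.cast φ₁ φ₂ .matchfail) .matchfail

/-- multi-step evaluation -/
def Steps : Tm → Tm → Prop := Relation.ReflTransGen Step

def Converges (M : Tm) : Prop := ∃ W, Steps M W ∧ Value W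

/-! ### Cast classification and target precision -/

def SafeCast (φ₁ φ₂ : Tag) : Prop := φ₂ = Tag.plus
def BackCast (φ₁ φ₂ : Tag) : Prop :=
  φ₁ = Tag.plus ∧ (φ₂ = Tag.plus1 ∨ φ₂ = Tag.plus2)
def MatchCast (φ₁ φ₂ : Tag) : Prop :=
  (φ₁ = Tag.plus1 ∧ φ₂ = Tag.plus2) ∨ (φ₁ = Tag.plus2 ∧ φ₂ = Tag.plus1)

/-- precision between casts: `⟨φ₁' ⇒ φ₂'⟩ ⊑ ⟨φ₁ ⇒ φ₂⟩` -/
inductive CastPrec : Tag → Tag → Tag → Tag → Prop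
| refl : ∀ {φ₁ φ₂}, CastPrec φ₁ φ₂ φ₁ φ₂
| mcBc : ∀ {a b c d}, MatchCast a b → BackCast c d → CastPrec a b c d
| bcSc : ∀ {a b c d}, BackCast a b → SafeCast c d → CastPrec a b c d
| mcSc : ∀ {a b c d}, MatchCast a b → SafeCast c d → CastPrec a b c d
| scSc : ∀ {φ}, CastPrec Tag.plus Tag.plus φ Tag.plus

/-- target term precision `M' ⊑ M` -/
inductive TPrec : Tm → Tm → Prop
| var : ∀ {n}, TPrec (.var n) (.var n)
| unit : TPrec .unit .unit
| lam : ∀ {T' T b' b}, TPrec b' b → TPrec (.lam T' b') (.lam T b)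
| app : ∀ {f' f a' a}, TPrec f' f → TPrec a' a → TPrec (.app f' a') (.app f a)
| inj : ∀ {i m' m}, TPrec m' m → TPrec (.inj i m') (.inj i m)
| case2 : ∀ {m' m b₁' b₁ b₂' b₂}, TPrec m' m → TPrec b₁' b₁ → TPrec b₂' b₂ →
    TPrec (.case2 m' b₁' b₂') (.case2 m b₁ b₂)
| case1 : ∀ {i m' m b' b}, TPrec m' m → TPrec b' b →
    TPrec (.case1 i m' b') (.case1 i m b)
| case1case2 : ∀ {i m' m b' b₁ b₂}, TPrec m' m → TPrec b' (if i then b₁ else b₂) →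
    TPrec (.case1 i m' b') (.case2 m b₁ b₂)
| matchfail : ∀ {m}, TPrec .matchfail m
| cast : ∀ {φ₁' φ₂' φ₁ φ₂ m' m}, CastPrec φ₁' φ₂' φ₁ φ₂ → TPrec m' m →
    TPrec (.cast φ₁' φ₂' m') (.cast φ₁ φ₂ m)
| castL : ∀ {φ₁ φ₂ m' m}, TPrec m' m → TPrec (.cast φ₁ φ₂ m') m

/-! ## Source language -/

inductive SCons | plus | plus1 | plus2 | plusQ | plusQ1 | plusQ2
deriving DecidableEq

inductive STy
| unit
| arr (A B : STy)
| sum (s : SCons) (A B : STy)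
deriving DecidableEq

/-- translation of sum constructors -/
def SCons.trans : SCons → Tag
| .plus => .plus | .plusQ => .plus
| .plus1 => .plus1 | .plusQ1 => .plus1
| .plus2 => .plus2 | .plusQ2 => .plus2

/-- type translation ⟦·⟧ -/
def STy.trans : STy → TTy
| .unit => .unit
| .arr A B => .arr A.trans B.trans
| .sum s A B => .sum s.trans A.trans B.trans

inductive SExp
| var (n : Nat)
| unit
| lam (A : STy) (b : SExp)
| app (f a : SExp)
| inj (i : Bool) (e : SExp)
| case2 (e b₁ b₂ : SExp)
| case1 (i : Bool) (e b : SExp)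
| anno (e : SExp) (A : STy)
deriving DecidableEq

/-! ### Source precision (more static = more precise) -/

inductive SConsPrec : SCons → SCons → Prop
| refl : ∀ {s}, SConsPrec s s
| pQ : SConsPrec .plus .plusQ
| p1Q1 : SConsPrec .plus1 .plusQ1
| p2Q2 : SConsPrec .plus2 .plusQ2
| p1Q : SConsPrec .plus1 .plusQ
| p2Q : SConsPrec .plus2 .plusQ
| q1Q : SConsPrec .plusQ1 .plusQ
| q2Q : SConsPrec .plusQ2 .plusQ

inductive SPrec : STy → STy → Prop
| unit : SPrec .unit .unit
| arr : ∀ {A' A B' B}, SPrec A' A → SPrec B' B → SPrec (.arr A' B') (.arr A B)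
| sum : ∀ {s' s A' A B' B}, SConsPrec s' s → SPrec A' A → SPrec B' B →
    SPrec (.sum s' A' B') (.sum s A B)

inductive EPrec : SExp → SExp → Prop
| var : ∀ {n}, EPrec (.var n) (.var n)
| unit : EPrec .unit .unit
| lam : ∀ {A' A b' b}, SPrec A' A → EPrec b' b → EPrec (.lam A' b') (.lam A b)
| app : ∀ {f' f a' a}, EPrec f' f → EPrec a' a → EPrec (.app f' a') (.app f a)
| inj : ∀ {i e' e}, EPrec e' e → EPrec (.inj i e') (.inj i e)
| case2 : ∀ {e' e b₁' b₁ b₂' b₂}, EPrec e' e → EPrec b₁' b₁ → EPrec b₂' b₂ →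
    EPrec (.case2 e' b₁' b₂') (.case2 e b₁ b₂)
| case1 : ∀ {i e' e b' b}, EPrec e' e → EPrec b' b → EPrec (.case1 i e' b') (.case1 i e b)
| anno : ∀ {e' e A' A}, EPrec e' e → SPrec A' A → EPrec (.anno e' A') (.anno e A)

def CtxPrec (Γ' Γ : List STy) : Prop := List.Forall₂ SPrec Γ' Γ

/-! ### Directed consistency -/

inductive SConsDir : SCons → SCons → Prop
| refl : ∀ {s}, SConsDir s s
| toQ : ∀ {s}, SConsDir s .plusQ
| fromQ : ∀ {s}, SConsDir .plusQ s
| oneLs : SConsDir .plus1 .plus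
| oneRs : SConsDir .plus2 .plus
| oneLq : SConsDir .plusQ1 .plus
| oneRq : SConsDir .plusQ2 .plus
| q1p1 : SConsDir .plusQ1 .plus1
| p1q1 : SConsDir .plus1 .plusQ1
| q2p2 : SConsDir .plusQ2 .plus2
| p2q2 : SConsDir .plus2 .plusQ2

inductive DCons : STy → STy → Prop
| unit : DCons .unit .unit
| arr : ∀ {A₁ A₁' A₂ A₂'}, DCons A₁ A₁' → DCons A₂' A₂ →
    DCons (.arr A₁' A₂') (.arr A₁ A₂)
| sum : ∀ {s' s A₁' A₁ A₂' A₂}, SConsDir s' s → DCons A₁' A₁ → DCons A₂' A₂ →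
    DCons (.sum s' A₁' A₂') (.sum s A₁ A₂)

/-! ### Bidirectional typing -/

mutual
inductive Chk : List STy → SExp → STy → Prop
| unit : ∀ {Γ}, Chk Γ .unit .unit
| lam : ∀ {Γ A B b}, Chk (A :: Γ) b B → Chk Γ (.lam A b) (.arr A B)
| inj1 : ∀ {Γ e A₁ A₂}, Chk Γ e A₁ → Chk Γ (.inj true e) (.sum .plusQ1 A₁ A₂)
| inj2 : ∀ {Γ e A₁ A₂}, Chk Γ e A₂ → Chk Γ (.inj false e) (.sum .plusQ2 A₁ A₂)
| case2 : ∀ {Γ e b₁ b₂ s A₁ A₂ C}, Syn Γ e (.sum s A₁ A₂) →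
    Chk (A₁ :: Γ) b₁ C → Chk (A₂ :: Γ) b₂ C → Chk Γ (.case2 e b₁ b₂) C
| case1 : ∀ {Γ i e b s A₁ A₂ C}, Syn Γ e (.sum s A₁ A₂) →
    s = (if i then SCons.plus1 else SCons.plus2) →
    Chk ((if i then A₁ else A₂) :: Γ) b C → Chk Γ (.case1 i e b) C
| sub : ∀ {Γ e A B}, Syn Γ e A → DCons A B → Chk Γ e B

inductive Syn : List STy → SExp → STy → Prop
| var : ∀ {Γ n A}, Γ[n]? = some A → Syn Γ (.var n) A
| anno : ∀ {Γ e A}, Chk Γ e A → Syn Γ (.anno e A) A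
| app : ∀ {Γ f a A B}, Syn Γ f (.arr A B) → Chk Γ a A → Syn Γ (.app f a) B
end

/-! ### Type assignment -/

inductive SAssign : List STy → SExp → STy → Prop
| var : ∀ {Γ n A}, Γ[n]? = some A → SAssign Γ (.var n) A
| unit : ∀ {Γ}, SAssign Γ .unit .unit
| lam : ∀ {Γ A B b}, SAssign (A :: Γ) b B → SAssign Γ (.lam A b) (.arr A B)
| app : ∀ {Γ f a A B}, SAssign Γ f (.arr A B) → SAssign Γ a A → SAssign Γ (.app f a) B
| inj1 : ∀ {Γ e A₁ A₂}, SAssign Γ e A₁ → SAssign Γ (.inj true e) (.sum .plusQ1 A₁ A₂)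
| inj2 : ∀ {Γ e A₁ A₂}, SAssign Γ e A₂ → SAssign Γ (.inj false e) (.sum .plusQ2 A₁ A₂)
| case2 : ∀ {Γ e b₁ b₂ s A₁ A₂ C}, SAssign Γ e (.sum s A₁ A₂) →
    SAssign (A₁ :: Γ) b₁ C → SAssign (A₂ :: Γ) b₂ C → SAssign Γ (.case2 e b₁ b₂) C
| case1 : ∀ {Γ i e b s A₁ A₂ C}, SAssign Γ e (.sum s A₁ A₂) →
    s = (if i then SCons.plus1 else SCons.plus2) →
    SAssign ((if i then A₁ else A₂) :: Γ) b C → SAssign Γ (.case1 i e b) C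
| anno : ∀ {Γ e A}, SAssign Γ e A → SAssign Γ (.anno e A) A
| sub : ∀ {Γ e A B}, SAssign Γ e A → DCons A B → SAssign Γ e B

/-! ### Coercion generation -/

inductive Coerce : STy → STy → (Tm → Tm) → Prop
| unit : Coerce .unit .unit id
| arr : ∀ {A₁ A₁' A₂ A₂' C₁ C₂}, Coerce A₁ A₁' C₁ → Coerce A₂' A₂ C₂ →
    Coerce (.arr A₁' A₂') (.arr A₁ A₂)
      (fun M => .lam A₁.trans (C₂ (.app (M.shift 1 0) (C₁ (.var 0)))))
| oneL : ∀ {s' s A₁' A₁ A₂' A₂ C₁}, (s' = .plus1 ∨ s' = .plusQ1) → SConsDir s' s →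
    Coerce A₁' A₁ C₁ →
    Coerce (.sum s' A₁' A₂') (.sum s A₁ A₂)
      (fun M => .cast s'.trans s.trans (.case1 true M (.inj true (C₁ (.var 0)))))
| oneR : ∀ {s' s A₁' A₁ A₂' A₂ C₂}, (s' = .plus2 ∨ s' = .plusQ2) → SConsDir s' s →
    Coerce A₂' A₂ C₂ →
    Coerce (.sum s' A₁' A₂') (.sum s A₁ A₂)
      (fun M => .cast s'.trans s.trans (.case1 false M (.inj false (C₂ (.var 0)))))
| two : ∀ {s' s A₁' A₁ A₂' A₂ C₁ C₂}, (s' = .plus ∨ s' = .plusQ) → SConsDir s' s →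
    Coerce A₁' A₁ C₁ → Coerce A₂' A₂ C₂ →
    Coerce (.sum s' A₁' A₂') (.sum s A₁ A₂)
      (fun M => .cast s'.trans s.trans
        (.case2 M (.cast .plus1 s'.trans (.inj true (C₁ (.var 0))))
                  (.cast .plus2 s'.trans (.inj false (C₂ (.var 0))))))

/-! ### Type-directed translation -/

inductive Translate : List STy → SExp → STy → Tm → Prop
| var : ∀ {Γ n A}, Γ[n]? = some A → Translate Γ (.var n) A (.var n)
| unit : ∀ {Γ}, Translate Γ .unit .unit .unit
| lam : ∀ {Γ A B b M}, Translate (A :: Γ) b B M → Translate Γ (.lam A b) (.arr A B) (.lam A.trans M)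
| app : ∀ {Γ f a A B Mf Ma}, Translate Γ f (.arr A B) Mf → Translate Γ a A Ma →
    Translate Γ (.app f a) B (.app Mf Ma)
| inj1 : ∀ {Γ e A₁ A₂ M}, Translate Γ e A₁ M →
    Translate Γ (.inj true e) (.sum .plusQ1 A₁ A₂) (.inj true M)
| inj2 : ∀ {Γ e A₁ A₂ M}, Translate Γ e A₂ M →
    Translate Γ (.inj false e) (.sum .plusQ2 A₁ A₂) (.inj false M)
| case2 : ∀ {Γ e b₁ b₂ s A₁ A₂ C Me M₁ M₂}, Translate Γ e (.sum s A₁ A₂) Me →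
    Translate (A₁ :: Γ) b₁ C M₁ → Translate (A₂ :: Γ) b₂ C M₂ →
    Translate Γ (.case2 e b₁ b₂) C (.case2 Me M₁ M₂)
| case1 : ∀ {Γ i e b s A₁ A₂ C Me Mb}, Translate Γ e (.sum s A₁ A₂) Me →
    s = (if i then SCons.plus1 else SCons.plus2) →
    Translate ((if i then A₁ else A₂) :: Γ) b C Mb →
    Translate Γ (.case1 i e b) C (.case1 i Me Mb)
| anno : ∀ {Γ e A M}, Translate Γ e A M → Translate Γ (.anno e A) A M
| sub : ∀ {Γ e A B M C}, Translate Γ e A M → DCons A B → Coerce A B C → Translate Γ e B (C M)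

/-! ### Static source programs -/

def SCons.isStatic : SCons → Prop := (· = SCons.plus)

def STy.isStatic : STy → Prop
| .unit => True
| .arr A B => A.isStatic ∧ B.isStatic
| .sum s A B => s.isStatic ∧ A.isStatic ∧ B.isStatic

def SExp.isStatic : SExp → Prop
| .var _ => True
| .unit => True
| .lam A b => A.isStatic ∧ b.isStatic
| .app f a => f.isStatic ∧ a.isStatic
| .inj _ e => e.isStatic
| .case2 e b₁ b₂ => e.isStatic ∧ b₁.isStatic ∧ b₂.isStatic
| .case1 _ e b => e.isStatic ∧ b.isStatic
| .anno e A => e.isStatic ∧ A.isStatic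

def staticCtx (Γ : List STy) : Prop := ∀ A ∈ Γ, A.isStatic

/-!
Every step of `M` is matched by finitely many steps of `M'` that preserve precision, so `M'`
reaches some `N' ⊑ inj_k W`. Catch-up then reduces `N'` to `matchfail` or to a value below
`inj_k W`. Since reduction is deterministic and `M'` reaches the normal form `inj_i W'`, that
value is `inj_i W'`, and inverting `inj_i W' ⊑ inj_k W` gives `i = k` and `W' ⊑ W`.
-/

theorem Value.not_step {v n : Tm} (hv : Value v) : ¬ Step v n := by
  induction hv generalizing n with
  | unit => nofun
  | lam => nofun
  | inj i m hm ih =>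
    intro h
    cases h with
    | injC h => exact ih h
    | mfInj => cases hm

theorem not_step_matchfail {n : Tm} : ¬ Step .matchfail n := nofun

theorem Step.right_unique : Relator.RightUnique Step := by
  intro a b c h1 h2
  induction h1 generalizing c <;> cases h2 <;>
    first
    | rfl
    | (congr 1; solve | (apply_assumption; assumption) | rfl)
    | (exfalso
       try casesm* Value (Tm.inj _ _), Value Tm.matchfail,
         Step (Tm.inj _ _) _, Step (Tm.lam _ _) _, Step Tm.unit _, Step Tm.matchfail _
       all_goals solve_by_elim [Value.not_step, not_step_matchfail])

theorem Steps.eq_of_irreducible {m a b : Tm} (ha : Steps m a) (hb : Steps m b)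
    (ha' : ∀ n, ¬ Step a n) (hb' : ∀ n, ¬ Step b n) : a = b := by
  have eq_of_steps {x y : Tm} (h : Steps x y) (hx : ∀ n, ¬ Step x n) : x = y :=
    (Relation.ReflTransGen.cases_head h).resolve_right fun ⟨n, hn, _⟩ => hx n hn
  rcases Relation.ReflTransGen.total_of_right_unique Step.right_unique ha hb with h | h
  exacts [eq_of_steps h ha', (eq_of_steps h hb').symm]

theorem Step.cast_inj {w : Tm} (φ₁ φ₂ : Tag) (j : Bool) (hw : Value w) :
    Step (.cast φ₁ φ₂ (.inj j w)) (.inj j w) ∨ Step (.cast φ₁ φ₂ (.inj j w)) .matchfail :=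
  (em (tagOk j φ₂)).imp (Step.castOk hw) (Step.castFail hw)

structure EvalFrame (F : Tm → Tm) : Prop where
  step : ∀ {m n}, Step m n → Step (F m) (F n)
  step_matchfail : Step (F .matchfail) .matchfail

namespace EvalFrame

theorem app_left (n : Tm) : EvalFrame (.app · n) := ⟨Step.app1, Step.mfApp1⟩
theorem app_right {v : Tm} (hv : Value v) : EvalFrame (.app v ·) := ⟨Step.app2 hv, Step.mfApp2 hv⟩
theorem inj (i : Bool) : EvalFrame (.inj i ·) := ⟨Step.injC, Step.mfInj⟩
theorem case2 (b₁ b₂ : Tm) : EvalFrame (.case2 · b₁ b₂) := ⟨Step.case2C, Step.mfCase2⟩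
theorem case1 (i : Bool) (b : Tm) : EvalFrame (.case1 i · b) := ⟨Step.case1C, Step.mfCase1⟩
theorem cast (φ₁ φ₂ : Tag) : EvalFrame (.cast φ₁ φ₂ ·) := ⟨Step.castC, Step.mfCast⟩

variable {F : Tm → Tm}

theorem steps (hF : EvalFrame F) {m n : Tm} (h : Steps m n) : Steps (F m) (F n) :=
  Relation.ReflTransGen.lift F (fun _ _ => hF.step) _ _ h

theorem steps_matchfail (hF : EvalFrame F) {m : Tm} (h : Steps m .matchfail) :
    Steps (F m) .matchfail :=
  Relation.ReflTransGen.tail (hF.steps h) hF.step_matchfail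

end EvalFrame

theorem List.getElem?_append_cons_shift {α : Type*} (Γ₁ Γ₂ : List α) (U : α) (n : ℕ) :
    (Γ₁ ++ U :: Γ₂)[if n < Γ₁.length then n else n + 1]? = (Γ₁ ++ Γ₂)[n]? := by
  split
  · rw [List.getElem?_append_left (by assumption), List.getElem?_append_left (by assumption)]
  · rw [List.getElem?_append_right (by omega), List.getElem?_append_right (by omega),
      Nat.sub_add_comm (by omega), List.getElem?_cons_succ]

theorem List.getElem?_append_cons_of_ne {α : Type*} (Γ₁ Γ₂ : List α) (U : α) {n : ℕ}
    (hn : n ≠ Γ₁.length) :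
    (Γ₁ ++ U :: Γ₂)[n]? = (Γ₁ ++ Γ₂)[if Γ₁.length < n then n - 1 else n]? := by
  rw [← List.getElem?_append_cons_shift Γ₁ Γ₂ U]
  congr 1
  split_ifs <;> omega

theorem Typed.shift {Γ₁ Γ₂ : List TTy} {m : Tm} {T : TTy} (U : TTy)
    (h : Typed (Γ₁ ++ Γ₂) m T) : Typed (Γ₁ ++ U :: Γ₂) (m.shift 1 Γ₁.length) T := by
  generalize hΓ : Γ₁ ++ Γ₂ = Γ at h
  induction h generalizing Γ₁ with subst hΓ
  | var hget =>
    exact Typed.var ((List.getElem?_append_cons_shift Γ₁ Γ₂ U _).trans hget)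
  | unit => exact Typed.unit
  | lam _ ih => exact Typed.lam (ih (Γ₁ := _ :: Γ₁) rfl)
  | app _ _ ihf iha => exact Typed.app (ihf rfl) (iha rfl)
  | inj _ hok ih => exact Typed.inj (ih rfl) hok
  | case2 _ _ _ ihm ih₁ ih₂ =>
    exact Typed.case2 (ihm rfl) (ih₁ (Γ₁ := _ :: Γ₁) rfl) (ih₂ (Γ₁ := _ :: Γ₁) rfl)
  | case1 _ _ ihm ihb => exact Typed.case1 (ihm rfl) (ihb (Γ₁ := _ :: Γ₁) rfl)
  | cast _ ih => exact Typed.cast (ih rfl)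
  | matchfail => exact Typed.matchfail

theorem Typed.subst {Γ₁ Γ₂ : List TTy} {m s : Tm} {T U : TTy}
    (h : Typed (Γ₁ ++ U :: Γ₂) m T) (hs : Typed (Γ₁ ++ Γ₂) s U) :
    Typed (Γ₁ ++ Γ₂) (m.subst Γ₁.length s) T := by
  generalize hΓ : Γ₁ ++ U :: Γ₂ = Γ at h
  induction h generalizing Γ₁ s with subst hΓ
  | @var _ n _ hget =>
    simp only [Tm.subst]
    split_ifs with hn hlt
    · subst hn
      simp_all
    all_goals
      refine Typed.var ?_
      rw [← hget, List.getElem?_append_cons_of_ne _ _ _ hn]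
      simp [hlt]
  | unit => exact Typed.unit
  | lam _ ih => exact Typed.lam (ih (Γ₁ := _ :: Γ₁) (hs.shift (Γ₁ := []) _) rfl)
  | app _ _ ihf iha => exact Typed.app (ihf hs rfl) (iha hs rfl)
  | inj _ hok ih => exact Typed.inj (ih hs rfl) hok
  | case2 _ _ _ ihm ih₁ ih₂ =>
    exact Typed.case2 (ihm hs rfl) (ih₁ (Γ₁ := _ :: Γ₁) (hs.shift (Γ₁ := []) _) rfl)
      (ih₂ (Γ₁ := _ :: Γ₁) (hs.shift (Γ₁ := []) _) rfl)
  | case1 _ _ ihm ihb =>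
    exact Typed.case1 (ihm hs rfl) (ihb (Γ₁ := _ :: Γ₁) (hs.shift (Γ₁ := []) _) rfl)
  | cast _ ih => exact Typed.cast (ih hs rfl)
  | matchfail => exact Typed.matchfail

theorem Typed.subst0 {Γ : List TTy} {b s : Tm} {T U : TTy} (hb : Typed (U :: Γ) b T)
    (hs : Typed Γ s U) : Typed Γ (b.subst0 s) T :=
  Typed.subst (Γ₁ := []) hb hs

theorem Step.preserves_typed {Γ : List TTy} {m n : Tm} {T : TTy} (hs : Step m n)
    (h : Typed Γ m T) : Typed Γ n T := by
  induction hs generalizing T with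
  | beta => cases h with | app hf ha => cases hf with | lam hb => exact hb.subst0 ha
  | app1 _ ih => cases h with | app hf ha => exact Typed.app (ih hf) ha
  | app2 _ _ ih => cases h with | app hf ha => exact Typed.app hf (ih ha)
  | injC _ ih => cases h with | inj hm hok => exact Typed.inj (ih hm) hok
  | case2C _ ih => cases h with | case2 hm h₁ h₂ => exact Typed.case2 (ih hm) h₁ h₂
  | case1C _ ih => cases h with | case1 hm hb => exact Typed.case1 (ih hm) hb
  | castC _ ih => cases h with | cast hm => exact Typed.cast (ih hm)
  | @case2R i =>
    cases h with | case2 hm h₁ h₂ => cases hm with | inj hv =>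
    cases i
    · exact h₂.subst0 hv
    · exact h₁.subst0 hv
  | case1R => cases h with | case1 hm hb => cases hm with | inj hv => exact hb.subst0 hv
  | castOk _ hok => cases h with | cast hm => cases hm with | inj hv => exact Typed.inj hv hok
  | _ => exact Typed.matchfail

theorem Steps.preserves_typed {Γ : List TTy} {m n : Tm} {T : TTy} (hs : Steps m n)
    (h : Typed Γ m T) : Typed Γ n T :=
  Relation.ReflTransGen.rec h (fun _ hstep ih => hstep.preserves_typed ih) hs

theorem TPrec.shift {m' m : Tm} (h : TPrec m' m) (d c : ℕ) :
    TPrec (m'.shift d c) (m.shift d c) := by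
  induction h generalizing c with
  | var => simp only [Tm.shift]; exact TPrec.var
  | unit => exact TPrec.unit
  | lam _ ih => exact TPrec.lam (ih _)
  | app _ _ ihf iha => exact TPrec.app (ihf c) (iha c)
  | inj _ ih => exact TPrec.inj (ih c)
  | case2 _ _ _ ihm ih₁ ih₂ => exact TPrec.case2 (ihm c) (ih₁ _) (ih₂ _)
  | case1 _ _ ihm ihb => exact TPrec.case1 (ihm c) (ihb _)
  | @case1case2 i _ _ _ _ _ _ _ ihm ihb =>
    refine TPrec.case1case2 (ihm c) ?_
    cases i <;> exact ihb _
  | matchfail => exact TPrec.matchfail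
  | cast hφ _ ih => exact TPrec.cast hφ (ih c)
  | castL _ ih => exact TPrec.castL (ih c)

theorem TPrec.subst {b' b s' s : Tm} (hb : TPrec b' b) (hs : TPrec s' s) (k : ℕ) :
    TPrec (b'.subst k s') (b.subst k s) := by
  induction hb generalizing k s' s with
  | var => simp only [Tm.subst]; split_ifs <;> first | exact hs | exact TPrec.var
  | unit => exact TPrec.unit
  | lam _ ih => exact TPrec.lam (ih (hs.shift 1 0) _)
  | app _ _ ihf iha => exact TPrec.app (ihf hs k) (iha hs k)
  | inj _ ih => exact TPrec.inj (ih hs k)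
  | case2 _ _ _ ihm ih₁ ih₂ =>
    exact TPrec.case2 (ihm hs k) (ih₁ (hs.shift 1 0) _) (ih₂ (hs.shift 1 0) _)
  | case1 _ _ ihm ihb => exact TPrec.case1 (ihm hs k) (ihb (hs.shift 1 0) _)
  | @case1case2 i _ _ _ _ _ _ _ ihm ihb =>
    refine TPrec.case1case2 (ihm hs k) ?_
    cases i <;> exact ihb (hs.shift 1 0) _
  | matchfail => exact TPrec.matchfail
  | cast hφ _ ih => exact TPrec.cast hφ (ih hs k)
  | castL _ ih => exact TPrec.castL (ih hs k)

theorem TPrec.subst0 {b' b s' s : Tm} (hb : TPrec b' b) (hs : TPrec s' s) :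
    TPrec (b'.subst0 s') (b.subst0 s) :=
  hb.subst hs 0

theorem TPrec.exists_lam_of_value {u b : Tm} {T : TTy} (hu : Value u) (h : TPrec u (.lam T b)) :
    ∃ T' b', u = .lam T' b' ∧ TPrec b' b := by
  cases h with
  | lam hb => exact ⟨_, _, rfl, hb⟩
  | matchfail => cases hu
  | castL _ => cases hu

theorem TPrec.exists_inj_of_value {u v : Tm} {j : Bool} (hu : Value u)
    (h : TPrec u (.inj j v)) : ∃ w, u = .inj j w ∧ Value w ∧ TPrec w v := by
  cases h with
  | inj hw => cases hu with | inj _ _ hwv => exact ⟨_, rfl, hwv, hw⟩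
  | matchfail => cases hu
  | castL _ => cases hu

theorem TPrec.steps_matchfail {m' : Tm} (h : TPrec m' .matchfail) : Steps m' .matchfail := by
  generalize hm : Tm.matchfail = m at h
  induction h <;> cases hm
  case matchfail => exact Relation.ReflTransGen.refl
  case castL ih => exact (EvalFrame.cast _ _).steps_matchfail (ih rfl)

theorem eq_of_tagOk_ite {i j : Bool} (h : tagOk j (if i then Tag.plus1 else Tag.plus2)) :
    j = i := by
  cases i <;> cases j <;> simp_all [tagOk]

theorem CastPrec.tagOk {φ₁' φ₂' φ₁ φ₂ : Tag} {j : Bool} (hcp : CastPrec φ₁' φ₂' φ₁ φ₂)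
    (h₁ : tagOk j φ₁') (h₂ : tagOk j φ₂') : tagOk j φ₂ := by
  unfold _root_.tagOk at *
  cases hcp <;> cases j <;> grind [MatchCast, BackCast, SafeCast]

theorem Value.exists_inj_of_typed {u : Tm} {φ : Tag} {T₁ T₂ : TTy} (hu : Value u)
    (h : Typed [] u (.sum φ T₁ T₂)) : ∃ j w, u = .inj j w ∧ Value w := by
  cases hu with
  | unit => cases h
  | lam => cases h
  | inj j w hw => exact ⟨j, w, rfl, hw⟩

theorem TPrec.catchup {m' v : Tm} {T' : TTy} (h : TPrec m' v) (hv : Value v)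
    (ht : Typed [] m' T') : ∃ u, Steps m' u ∧ (Value u ∧ TPrec u v ∨ u = .matchfail) := by
  induction h generalizing T' with
  | unit => exact ⟨_, .refl, .inl ⟨Value.unit, TPrec.unit⟩⟩
  | lam hb => exact ⟨_, .refl, .inl ⟨Value.lam _ _, TPrec.lam hb⟩⟩
  | inj _ ih =>
    cases hv with | inj _ _ hwv =>
    cases ht with | inj htw _ =>
    obtain ⟨u, hu, ⟨huv, hup⟩ | rfl⟩ := ih hwv htw
    · exact ⟨_, (EvalFrame.inj _).steps hu, .inl ⟨Value.inj _ _ huv, TPrec.inj hup⟩⟩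
    · exact ⟨_, (EvalFrame.inj _).steps_matchfail hu, .inr rfl⟩
  | matchfail => exact ⟨_, .refl, .inr rfl⟩
  | castL _ ih =>
    cases ht with | cast htm =>
    obtain ⟨u, hu, ⟨huv, hup⟩ | rfl⟩ := ih hv htm
    · obtain ⟨j, w, rfl, hw⟩ := huv.exists_inj_of_typed (hu.preserves_typed htm)
      rcases Step.cast_inj _ _ j hw with hs | hs
      · exact ⟨_, .tail ((EvalFrame.cast _ _).steps hu) hs, .inl ⟨huv, hup⟩⟩
      · exact ⟨_, .tail ((EvalFrame.cast _ _).steps hu) hs, .inr rfl⟩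
    · exact ⟨_, (EvalFrame.cast _ _).steps_matchfail hu, .inr rfl⟩
  | _ => cases hv

def ReachesBelow (M' N : Tm) : Prop := ∃ N', Steps M' N' ∧ TPrec N' N

namespace ReachesBelow

variable {M' N : Tm}

theorem of_steps_matchfail (h : Steps M' .matchfail) : ReachesBelow M' N :=
  ⟨_, h, TPrec.matchfail⟩

theorem of_step {N' : Tm} (hs : Step M' N') (h : TPrec N' N) : ReachesBelow M' N :=
  ⟨_, .single hs, h⟩

theorem head {M'' : Tm} (hs : Steps M' M'') (h : ReachesBelow M'' N) : ReachesBelow M' N :=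
  let ⟨N', hN', hp⟩ := h
  ⟨N', .trans hs hN', hp⟩

end ReachesBelow

theorem EvalFrame.reachesBelow_of_catchup {F : Tm → Tm} (hF : EvalFrame F) {m' v N : Tm}
    {T' : TTy} (hm : TPrec m' v) (hv : Value v) (ht : Typed [] m' T')
    (hval : ∀ u, Value u → TPrec u v → Typed [] u T' → ReachesBelow (F u) N) :
    ReachesBelow (F m') N := by
  obtain ⟨u, hu, ⟨huv, hup⟩ | rfl⟩ := hm.catchup hv ht
  · exact (hval u huv hup (hu.preserves_typed ht)).head (hF.steps hu)
  · exact .of_steps_matchfail (hF.steps_matchfail hu)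

def SimulatesStep (M' M : Tm) : Prop :=
  ∀ {N : Tm} {T' : TTy}, Typed [] M' T' → Step M N → ReachesBelow M' N

section SimulatesStep

variable {m' m : Tm}

theorem simulatesStep_app {a' a : Tm} (hf : TPrec m' m) (ha : TPrec a' a)
    (ihf : SimulatesStep m' m) (iha : SimulatesStep a' a) :
    SimulatesStep (.app m' a') (.app m a) := by
  intro N T' ht hs
  cases ht with | app htf hta =>
  have hF := EvalFrame.app_left a'
  cases hs with
  | beta hv =>
    refine hF.reachesBelow_of_catchup hf (Value.lam _ _) htf fun u hu hup _ => ?_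
    obtain ⟨_, b', rfl, hb⟩ := hup.exists_lam_of_value hu
    exact (EvalFrame.app_right hu).reachesBelow_of_catchup ha hv hta fun w hw hwp _ =>
      .of_step (Step.beta hw) (hb.subst0 hwp)
  | app1 hs =>
    obtain ⟨g, hg, hgp⟩ := ihf htf hs
    exact ⟨_, hF.steps hg, TPrec.app hgp ha⟩
  | app2 hv hs =>
    refine hF.reachesBelow_of_catchup hf hv htf fun u hu hup _ => ?_
    obtain ⟨g, hg, hgp⟩ := iha hta hs
    exact ⟨_, (EvalFrame.app_right hu).steps hg, TPrec.app hup hgp⟩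
  | mfApp1 => exact .of_steps_matchfail (hF.steps_matchfail hf.steps_matchfail)
  | mfApp2 hv =>
    exact hF.reachesBelow_of_catchup hf hv htf fun u hu _ _ =>
      .of_steps_matchfail ((EvalFrame.app_right hu).steps_matchfail ha.steps_matchfail)

theorem simulatesStep_inj {i : Bool} (hm : TPrec m' m) (ih : SimulatesStep m' m) :
    SimulatesStep (.inj i m') (.inj i m) := by
  intro N T' ht hs
  cases ht with | inj htm _ =>
  cases hs with
  | injC hs =>
    obtain ⟨g, hg, hgp⟩ := ih htm hs
    exact ⟨_, (EvalFrame.inj i).steps hg, TPrec.inj hgp⟩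
  | mfInj => exact .of_steps_matchfail ((EvalFrame.inj i).steps_matchfail hm.steps_matchfail)

theorem simulatesStep_case2 {b₁' b₁ b₂' b₂ : Tm} (hm : TPrec m' m) (h₁ : TPrec b₁' b₁)
    (h₂ : TPrec b₂' b₂) (ih : SimulatesStep m' m) :
    SimulatesStep (.case2 m' b₁' b₂') (.case2 m b₁ b₂) := by
  intro N T' ht hs
  cases ht with | case2 htm _ _ =>
  have hF := EvalFrame.case2 b₁' b₂'
  cases hs with
  | case2C hs =>
    obtain ⟨g, hg, hgp⟩ := ih htm hs
    exact ⟨_, hF.steps hg, TPrec.case2 hgp h₁ h₂⟩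
  | @case2R j v _ _ hv =>
    refine hF.reachesBelow_of_catchup hm (Value.inj j v hv) htm fun u hu hup _ => ?_
    obtain ⟨w, rfl, hw, hwp⟩ := hup.exists_inj_of_value hu
    refine .of_step (Step.case2R hw) ?_
    cases j
    · exact h₂.subst0 hwp
    · exact h₁.subst0 hwp
  | mfCase2 => exact .of_steps_matchfail (hF.steps_matchfail hm.steps_matchfail)

theorem simulatesStep_case1 {i : Bool} {b' b : Tm} (hm : TPrec m' m) (hb : TPrec b' b)
    (ih : SimulatesStep m' m) : SimulatesStep (.case1 i m' b') (.case1 i m b) := by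
  intro N T' ht hs
  cases ht with | case1 htm _ =>
  have hF := EvalFrame.case1 i b'
  cases hs with
  | case1C hs =>
    obtain ⟨g, hg, hgp⟩ := ih htm hs
    exact ⟨_, hF.steps hg, TPrec.case1 hgp hb⟩
  | case1R hv =>
    refine hF.reachesBelow_of_catchup hm (Value.inj i _ hv) htm fun u hu hup _ => ?_
    obtain ⟨w, rfl, hw, hwp⟩ := hup.exists_inj_of_value hu
    exact .of_step (Step.case1R hw) (hb.subst0 hwp)
  | mfCase1 => exact .of_steps_matchfail (hF.steps_matchfail hm.steps_matchfail)

theorem simulatesStep_case1case2 {i : Bool} {b' b₁ b₂ : Tm} (hm : TPrec m' m)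
    (hb : TPrec b' (if i then b₁ else b₂)) (ih : SimulatesStep m' m) :
    SimulatesStep (.case1 i m' b') (.case2 m b₁ b₂) := by
  intro N T' ht hs
  cases ht with | case1 htm _ =>
  have hF := EvalFrame.case1 i b'
  cases hs with
  | case2C hs =>
    obtain ⟨g, hg, hgp⟩ := ih htm hs
    exact ⟨_, hF.steps hg, TPrec.case1case2 hgp hb⟩
  | @case2R j v _ _ hv =>
    refine hF.reachesBelow_of_catchup hm (Value.inj j v hv) htm fun u hu hup hut => ?_
    obtain ⟨w, rfl, hw, hwp⟩ := hup.exists_inj_of_value hu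
    -- the scrutinee of `case1 i` is typed at the `i`-th one-sided sum, so its tag is `i`
    cases hut with | inj _ hok =>
    obtain rfl := eq_of_tagOk_ite hok
    exact .of_step (Step.case1R hw) (hb.subst0 hwp)
  | mfCase2 => exact .of_steps_matchfail (hF.steps_matchfail hm.steps_matchfail)

theorem simulatesStep_cast {φ₁' φ₂' φ₁ φ₂ : Tag} (hcp : CastPrec φ₁' φ₂' φ₁ φ₂)
    (hm : TPrec m' m) (ih : SimulatesStep m' m) :
    SimulatesStep (.cast φ₁' φ₂' m') (.cast φ₁ φ₂ m) := by
  intro N T' ht hs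
  cases ht with | cast htm =>
  have hF := EvalFrame.cast φ₁' φ₂'
  cases hs with
  | castC hs =>
    obtain ⟨g, hg, hgp⟩ := ih htm hs
    exact ⟨_, hF.steps hg, TPrec.cast hcp hgp⟩
  | @castOk _ _ j v hv _ =>
    refine hF.reachesBelow_of_catchup hm (Value.inj j v hv) htm fun u hu hup _ => ?_
    obtain ⟨w, rfl, hw, hwp⟩ := hup.exists_inj_of_value hu
    rcases Step.cast_inj φ₁' φ₂' j hw with hs | hs
    · exact .of_step hs (TPrec.inj hwp)
    · exact .of_step hs TPrec.matchfail
  | @castFail _ _ j v hv hfail =>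
    refine hF.reachesBelow_of_catchup hm (Value.inj j v hv) htm fun u hu hup hut => ?_
    obtain ⟨w, rfl, hw, -⟩ := hup.exists_inj_of_value hu
    cases hut with | inj _ hok₁ =>
    exact .of_step (Step.castFail hw fun hok₂ => hfail (hcp.tagOk hok₁ hok₂)) TPrec.matchfail
  | mfCast => exact .of_steps_matchfail (hF.steps_matchfail hm.steps_matchfail)

theorem simulatesStep_castL {φ₁ φ₂ : Tag} (ih : SimulatesStep m' m) :
    SimulatesStep (.cast φ₁ φ₂ m') m := by
  intro N T' ht hs
  cases ht with | cast htm =>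
  obtain ⟨g, hg, hgp⟩ := ih htm hs
  exact ⟨_, (EvalFrame.cast φ₁ φ₂).steps hg, TPrec.castL hgp⟩

end SimulatesStep

theorem TPrec.simulatesStep {M' M : Tm} (h : TPrec M' M) : SimulatesStep M' M := by
  induction h with
  | app hf ha ihf iha => exact simulatesStep_app hf ha ihf iha
  | inj hm ih => exact simulatesStep_inj hm ih
  | case2 hm h₁ h₂ ih => exact simulatesStep_case2 hm h₁ h₂ ih
  | case1 hm hb ih => exact simulatesStep_case1 hm hb ih
  | case1case2 hm hb ih => exact simulatesStep_case1case2 hm hb ih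
  | cast hcp hm ih => exact simulatesStep_cast hcp hm ih
  | castL _ ih => exact simulatesStep_castL ih
  | matchfail => exact fun _ _ => .of_steps_matchfail .refl
  | var | unit | lam => exact fun _ hs => nomatch hs

theorem TPrec.reachesBelow_of_steps {M' M N : Tm} {T' : TTy} (h : TPrec M' M)
    (ht : Typed [] M' T') (hs : Steps M N) : ReachesBelow M' N := by
  induction hs with
  | refl => exact ⟨M', .refl, h⟩
  | tail _ hstep ih =>
    obtain ⟨N', hN', hp⟩ := ih
    exact (hp.simulatesStep (hN'.preserves_typed ht) hstep).head hN'

theorem TPrec.catchup_of_steps {M' M V : Tm} {T' : TTy} (h : TPrec M' M)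
    (ht : Typed [] M' T') (hs : Steps M V) (hV : Value V) :
    ∃ u, Steps M' u ∧ (Value u ∧ TPrec u V ∨ u = .matchfail) := by
  obtain ⟨N', hN', hp⟩ := h.reachesBelow_of_steps ht hs
  obtain ⟨u, hu, hres⟩ := hp.catchup hV (hN'.preserves_typed ht)
  exact ⟨u, .trans hN' hu, hres⟩

/-- precise convergence to injections agrees on tags. -/
theorem tprec_injection_tags {M' M W' W : Tm} {i k : Bool} {T' T : TTy}
    (hprec : TPrec M' M) (hty' : Typed [] M' T') (hty : Typed [] M T)
    (h1 : Steps M' (.inj i W')) (hv1 : Value W')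
    (h2 : Steps M (.inj k W)) (hv2 : Value W) :
    i = k ∧ TPrec W' W := by
  obtain ⟨u, hu, hres⟩ := hprec.catchup_of_steps hty' h2 (Value.inj k W hv2)
  have hirr : ∀ n, ¬ Step u n := by
    rcases hres with ⟨huv, -⟩ | rfl
    exacts [fun _ => huv.not_step, fun _ => not_step_matchfail]
  obtain rfl : u = .inj i W' :=
    Steps.eq_of_irreducible hu h1 hirr fun _ => (Value.inj i W' hv1).not_step
  rcases hres with ⟨-, hW⟩ | hmf
  · cases hW with | inj hW => exact ⟨rfl, hW⟩
  · cases hmf
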